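/- Let c : S^{N-1} → ℝ be positive and lower semicontinuous, and define w(e) = inf { c(e')/(e·e') : e' ∈ S^{N-1}, e·e' > 0 }. Then w is positive and continuous on S^{N-1}. -/
import Mathlib


open scoped RealInnerProductSpace

noncomputable section

/-- The Freidlin–Gärtner speed function associated with `c`:
`w(e) = inf { c(e') / ⟪e, e'⟫ : e' ∈ S^{N-1}, ⟪e, e'⟫ > 0 }`. -/
def fgSpeed (N : ℕ) (c : EuclideanSpace ℝ (Fin N) → ℝ) (e : EuclideanSpace ℝ (Fin N)) : ℝ :=
  sInf {r : ℝ | ∃ e' ∈ Metric.sphere (0 : EuclideanSpace ℝ (Fin N)) 1,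
    0 < ⟪e, e'⟫ ∧ r = c e' / ⟪e, e'⟫}

/-- A positive lower semicontinuous function on a compact set has a positive lower bound. -/
lemma lsc_pos_lower_bound {X : Type*} [TopologicalSpace X] {s : Set X} {c : X → ℝ}
    (hs : IsCompact s) (hpos : ∀ x ∈ s, 0 < c x) (hlsc : LowerSemicontinuousOn c s) :
    ∃ m > 0, ∀ x ∈ s, m ≤ c x := by
  rcases s.eq_empty_or_nonempty with hse | hse
  · exact ⟨1, one_pos, fun x hx => by simp [hse] at hx⟩
  have key : ∀ x : s, ∃ V : Set X, IsOpen V ∧ (x : X) ∈ V ∧ ∀ y ∈ V ∩ s, c x / 2 < c y := by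
    rintro ⟨x, hx⟩
    have h := hlsc x hx (c x / 2) (by linarith [hpos x hx])
    rcases mem_nhdsWithin.1 h with ⟨V, hVo, hxV, hV⟩
    exact ⟨V, hVo, hxV, fun y hy => hV hy⟩
  choose V hVo hxV hV using key
  have hcover : s ⊆ ⋃ x : s, V x := fun y hy =>
    Set.mem_iUnion.2 ⟨⟨y, hy⟩, hxV ⟨y, hy⟩⟩
  rcases hs.elim_finite_subcover V hVo hcover with ⟨t, ht⟩
  have htne : t.Nonempty := by
    rcases hse with ⟨y, hy⟩
    rcases Set.mem_iUnion₂.1 (ht hy) with ⟨x, hxt, _⟩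
    exact ⟨x, hxt⟩
  refine ⟨t.inf' htne (fun x => c x / 2), ?_, ?_⟩
  · rw [gt_iff_lt, Finset.lt_inf'_iff]
    intro x hx
    have := hpos x x.2
    linarith
  · intro y hy
    rcases Set.mem_iUnion₂.1 (ht hy) with ⟨x, hxt, hyV⟩
    exact le_trans (Finset.inf'_le _ hxt) (hV x y ⟨hyV, hy⟩).le

/-- If `c` is positive and lower semicontinuous on the unit sphere, then the associated
Freidlin–Gärtner speed function `w` is positive and continuous on the sphere. -/
theorem fgSpeed_pos_continuous
    (N : ℕ) (hN : 1 ≤ N) (c : EuclideanSpace ℝ (Fin N) → ℝ)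
    (hpos : ∀ e ∈ Metric.sphere (0 : EuclideanSpace ℝ (Fin N)) 1, 0 < c e)
    (hlsc : LowerSemicontinuousOn c (Metric.sphere (0 : EuclideanSpace ℝ (Fin N)) 1)) :
    (∀ e ∈ Metric.sphere (0 : EuclideanSpace ℝ (Fin N)) 1, 0 < fgSpeed N c e) ∧
      ContinuousOn (fgSpeed N c) (Metric.sphere (0 : EuclideanSpace ℝ (Fin N)) 1) := by
  classical
  set S := Metric.sphere (0 : EuclideanSpace ℝ (Fin N)) 1 with hS
  set A : EuclideanSpace ℝ (Fin N) → Set ℝ := fun e =>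
    {r : ℝ | ∃ e' ∈ S, 0 < ⟪e, e'⟫ ∧ r = c e' / ⟪e, e'⟫} with hA
  have hAdef : ∀ e, fgSpeed N c e = sInf (A e) := fun e => rfl
  obtain ⟨m, hm, hmc⟩ := lsc_pos_lower_bound (isCompact_sphere (0 : EuclideanSpace ℝ (Fin N)) 1)
    hpos hlsc
  have hnorm : ∀ e ∈ S, ‖e‖ = 1 := fun e he => mem_sphere_zero_iff_norm.1 he
  -- nonemptiness of A e
  have hAne : ∀ e ∈ S, (A e).Nonempty := by
    intro e he
    have h1 : ⟪e, e⟫ = 1 := by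
      rw [real_inner_self_eq_norm_sq, hnorm e he]; norm_num
    exact ⟨c e, e, he, by rw [h1]; norm_num⟩
  -- lower bound m for A e
  have hlb : ∀ e ∈ S, ∀ r ∈ A e, m ≤ r := by
    rintro e he r ⟨e', he', hip, rfl⟩
    have h1 : ⟪e, e'⟫ ≤ 1 := by
      calc ⟪e, e'⟫ ≤ ‖e‖ * ‖e'‖ := real_inner_le_norm e e'
      _ = 1 := by rw [hnorm e he, hnorm e' he']; norm_num
    rw [le_div_iff₀ hip]
    nlinarith [hmc e' he']
  have hbdd : ∀ e ∈ S, BddBelow (A e) := fun e he => ⟨m, hlb e he⟩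
  have hwm : ∀ e ∈ S, m ≤ fgSpeed N c e := fun e he => by
    rw [hAdef]; exact le_csInf (hAne e he) (hlb e he)
  have hw0 : ∀ e ∈ S, 0 ≤ fgSpeed N c e := fun e he => le_trans hm.le (hwm e he)
  -- upper bound via membership
  have hwle : ∀ e ∈ S, ∀ e' ∈ S, 0 < ⟪e, e'⟫ → fgSpeed N c e ≤ c e' / ⟪e, e'⟫ := by
    intro e he e' he' hip
    rw [hAdef]
    exact csInf_le (hbdd e he) ⟨e', he', hip, rfl⟩
  -- local upper bound near a point
  have hub : ∀ e0 ∈ S, ∀ f ∈ S, dist f e0 ≤ 1 → fgSpeed N c f ≤ 2 * c e0 := by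
    intro e0 he0 f hf hd
    have hns : ‖f - e0‖ ^ 2 = 2 - 2 * ⟪f, e0⟫ := by
      rw [norm_sub_sq_real, hnorm f hf, hnorm e0 he0]; ring
    have hd2 : ‖f - e0‖ ^ 2 ≤ 1 := by
      rw [dist_eq_norm] at hd
      nlinarith [norm_nonneg (f - e0)]
    have hip : (1 : ℝ) / 2 ≤ ⟪f, e0⟫ := by nlinarith
    have hippos : 0 < ⟪f, e0⟫ := by linarith
    have := hwle f hf e0 he0 hippos
    have h2 : c e0 / ⟪f, e0⟫ ≤ 2 * c e0 := by
      rw [div_le_iff₀ hippos]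
      nlinarith [hpos e0 he0]
    linarith
  -- key Lipschitz-type estimate
  have hkey : ∀ e ∈ S, ∀ f ∈ S, ∀ M : ℝ, 0 < M → fgSpeed N c e ≤ M → dist e f < m / M →
      fgSpeed N c e - M ^ 2 / m * dist e f ≤ fgSpeed N c f := by
    intro e he f hf M hM hwM hdist
    rw [hAdef f]
    apply le_csInf (hAne f hf)
    rintro r ⟨e', he', hip, rfl⟩
    set d := dist e f with hd
    have hd0 : 0 ≤ d := dist_nonneg
    have hMm : 0 < M ^ 2 / m := by positivity
    by_cases hcase : ⟪f, e'⟫ < m / M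
    · -- inner product small: the ratio is larger than M
      have h1 : M * ⟪f, e'⟫ < m := by
        have : M * ⟪f, e'⟫ < M * (m / M) := by
          exact mul_lt_mul_of_pos_left hcase hM
        rwa [mul_div_cancel₀ _ hM.ne'] at this
      have h2 : M < c e' / ⟪f, e'⟫ := by
        rw [lt_div_iff₀ hip]
        have := hmc e' he'
        linarith
      nlinarith [hwM, mul_nonneg hMm.le hd0]
    · push_neg at hcase
      -- inner product with e is close
      have hinner : ⟪f, e'⟫ - d ≤ ⟪e, e'⟫ := by
        have h1 : |⟪e - f, e'⟫| ≤ ‖e - f‖ * ‖e'‖ := abs_real_inner_le_norm _ _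
        rw [hnorm e' he', mul_one, ← dist_eq_norm] at h1
        have h2 : ⟪e - f, e'⟫ = ⟪e, e'⟫ - ⟪f, e'⟫ := inner_sub_left e f e'
        have := abs_le.1 h1
        linarith [this.1]
      have hipe : 0 < ⟪e, e'⟫ := by linarith
      have h3 : fgSpeed N c e * ⟪e, e'⟫ ≤ c e' :=
        (le_div_iff₀ hipe).1 (hwle e he e' he' hipe)
      rw [le_div_iff₀ hip]
      -- need : (w e - M²/m * d) * ⟪f,e'⟫ ≤ c e'
      have h4 : fgSpeed N c e ≤ M ^ 2 / m * ⟪f, e'⟫ := by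
        have h5 : M ^ 2 / m * (m / M) = M := by
          field_simp
        calc fgSpeed N c e ≤ M := hwM
        _ = M ^ 2 / m * (m / M) := h5.symm
        _ ≤ M ^ 2 / m * ⟪f, e'⟫ := mul_le_mul_of_nonneg_left hcase hMm.le
      have h6 : fgSpeed N c e * d ≤ (M ^ 2 / m * d) * ⟪f, e'⟫ := by
        calc fgSpeed N c e * d ≤ (M ^ 2 / m * ⟪f, e'⟫) * d :=
              mul_le_mul_of_nonneg_right h4 hd0
        _ = (M ^ 2 / m * d) * ⟪f, e'⟫ := by ring
      have h7 : fgSpeed N c e * (⟪f, e'⟫ - d) ≤ fgSpeed N c e * ⟪e, e'⟫ :=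
        mul_le_mul_of_nonneg_left hinner (hw0 e he)
      nlinarith [h3, h6, h7]
  constructor
  · intro e he
    exact lt_of_lt_of_le hm (hwm e he)
  · intro e0 he0
    rw [Metric.continuousWithinAt_iff]
    intro ε hε
    set M := 2 * c e0 with hMdef
    have hM : 0 < M := by have := hpos e0 he0; positivity
    set K := M ^ 2 / m with hKdef
    have hK : 0 < K := by positivity
    refine ⟨min (min 1 (m / M)) (ε / K), by positivity, ?_⟩
    intro f hf hdist
    have hd1 : dist f e0 ≤ 1 := le_of_lt (lt_of_lt_of_le hdist
      (le_trans (min_le_left _ _) (min_le_left _ _)))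
    have hd2 : dist f e0 < m / M := lt_of_lt_of_le hdist
      (le_trans (min_le_left _ _) (min_le_right _ _))
    have hd3 : dist f e0 < ε / K := lt_of_lt_of_le hdist (min_le_right _ _)
    have hKd : K * dist f e0 < ε := by
      rw [lt_div_iff₀ hK] at hd3
      linarith [hd3]
    have hwfM : fgSpeed N c f ≤ M := hub e0 he0 f hf hd1
    have hwe0M : fgSpeed N c e0 ≤ M := hub e0 he0 e0 he0 (by simp)
    have h1 := hkey e0 he0 f hf M hM hwe0M (by rwa [dist_comm])
    have h2 := hkey f hf e0 he0 M hM hwfM hd2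
    rw [dist_comm e0 f] at h1
    rw [Real.dist_eq, abs_sub_lt_iff]
    constructor
    · -- w f - w e0 < ε
      have := h2
      rw [← hKdef] at this h1
      linarith
    · rw [← hKdef] at h1 h2
      linarith
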